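/- Let Ω be the unital ℂ-algebra with generators z, ∂, dz, d∂ and relations z^p = 0, ∂^p = 0, ∂z = (q−q⁻¹) + q⁻²z∂, dz·dz = 0, d∂·d∂ = 0, d∂·dz = −q⁻² dz·d∂, dz·z = q⁻² z·dz, d∂·∂ = q² ∂·d∂, dz·∂ = q² ∂·dz, d∂·z = q⁻² z·d∂. Then there is a well-defined ℂ-linear derivation-like differential d: Ω → Ω with d(z) = dz, d(∂) = d∂, d(dz) = 0, d(d∂) = 0, d(1) = 0, satisfying the graded Leibniz rule d(ab) = d(a)b + (−1)^{|a|} a d(b) (with |z| = |∂| = 0, |dz| = |d∂| = 1), and d² = 0. -/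

import Mathlib

/-!
STATEMENT 15: On the quantum de Rham complex `Ω = Ωℂ_q[z,∂]` (generators `z, ∂, dz, d∂`
with the listed relations), there is a well-defined ℂ-linear differential `d` with
`d(z) = dz`, `d(∂) = d∂`, `d(dz) = d(d∂) = 0`, `d(1) = 0`, satisfying the graded Leibniz
rule `d(ab) = d(a)b + (−1)^{|a|} a d(b)` (encoded via the parity algebra automorphism
`par : z ↦ z, ∂ ↦ ∂, dz ↦ −dz, d∂ ↦ −d∂`, as `d(ab) = d(a)b + par(a)d(b)`), and `d² = 0`.
-/

noncomputable section

/-- Relations of the quantum de Rham complex `Ωℂ_q[z,∂]`: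
`z = X 0`, `∂ = X 1`, `dz = X 2`, `d∂ = X 3`. -/
inductive oRel (p : ℕ) (q : ℂ) : FreeAlgebra ℂ (Fin 4) → FreeAlgebra ℂ (Fin 4) → Prop
  | znil : oRel p q ((FreeAlgebra.ι ℂ (0 : Fin 4)) ^ p) 0
  | dnil : oRel p q ((FreeAlgebra.ι ℂ (1 : Fin 4)) ^ p) 0
  | dz : oRel p q (FreeAlgebra.ι ℂ (1 : Fin 4) * FreeAlgebra.ι ℂ (0 : Fin 4))
      ((q - q⁻¹) • (1 : FreeAlgebra ℂ (Fin 4))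
        + ((q ^ 2)⁻¹) • (FreeAlgebra.ι ℂ (0 : Fin 4) * FreeAlgebra.ι ℂ (1 : Fin 4)))
  | dzdz : oRel p q ((FreeAlgebra.ι ℂ (2 : Fin 4)) ^ 2) 0
  | dddd : oRel p q ((FreeAlgebra.ι ℂ (3 : Fin 4)) ^ 2) 0
  | dddz : oRel p q (FreeAlgebra.ι ℂ (3 : Fin 4) * FreeAlgebra.ι ℂ (2 : Fin 4))
      ((-(q ^ 2)⁻¹) • (FreeAlgebra.ι ℂ (2 : Fin 4) * FreeAlgebra.ι ℂ (3 : Fin 4)))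
  | dz_z : oRel p q (FreeAlgebra.ι ℂ (2 : Fin 4) * FreeAlgebra.ι ℂ (0 : Fin 4))
      (((q ^ 2)⁻¹) • (FreeAlgebra.ι ℂ (0 : Fin 4) * FreeAlgebra.ι ℂ (2 : Fin 4)))
  | dd_d : oRel p q (FreeAlgebra.ι ℂ (3 : Fin 4) * FreeAlgebra.ι ℂ (1 : Fin 4))
      ((q ^ 2) • (FreeAlgebra.ι ℂ (1 : Fin 4) * FreeAlgebra.ι ℂ (3 : Fin 4)))
  | dz_d : oRel p q (FreeAlgebra.ι ℂ (2 : Fin 4) * FreeAlgebra.ι ℂ (1 : Fin 4))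
      ((q ^ 2) • (FreeAlgebra.ι ℂ (1 : Fin 4) * FreeAlgebra.ι ℂ (2 : Fin 4)))
  | dd_z : oRel p q (FreeAlgebra.ι ℂ (3 : Fin 4) * FreeAlgebra.ι ℂ (0 : Fin 4))
      (((q ^ 2)⁻¹) • (FreeAlgebra.ι ℂ (0 : Fin 4) * FreeAlgebra.ι ℂ (3 : Fin 4)))

/-- The quantum de Rham complex `Ωℂ_q[z,∂]` of `ℂ_q[z,∂]`. -/
def OmegaCq (p : ℕ) (q : ℂ) : Type := RingQuot (oRel p q)

instance (p : ℕ) (q : ℂ) : Ring (OmegaCq p q) := inferInstanceAs (Ring (RingQuot (oRel p q)))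
instance (p : ℕ) (q : ℂ) : Algebra ℂ (OmegaCq p q) :=
  inferInstanceAs (Algebra ℂ (RingQuot (oRel p q)))

def Zo (p : ℕ) (q : ℂ) : OmegaCq p q := RingQuot.mkAlgHom ℂ (oRel p q) (FreeAlgebra.ι ℂ 0)
def Do (p : ℕ) (q : ℂ) : OmegaCq p q := RingQuot.mkAlgHom ℂ (oRel p q) (FreeAlgebra.ι ℂ 1)
def DZo (p : ℕ) (q : ℂ) : OmegaCq p q := RingQuot.mkAlgHom ℂ (oRel p q) (FreeAlgebra.ι ℂ 2)
def DDo (p : ℕ) (q : ℂ) : OmegaCq p q := RingQuot.mkAlgHom ℂ (oRel p q) (FreeAlgebra.ι ℂ 3)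

/-!
The map `x ↦ !![par x, d x; 0, x]` is multiplicative exactly when `d` satisfies the graded
Leibniz rule `d (a * b) = d a * b + par a * d b`. So `d` is constructed as the `(0, 1)` entry of
the algebra map `Ω → Mat₂(Ω)` sending `z ↦ !![z, dz; 0, z]`, `∂ ↦ !![∂, d∂; 0, ∂]`,
`dz ↦ !![-dz, 0; 0, dz]`, `d∂ ↦ !![-d∂, 0; 0, d∂]`; well-definedness means checking that these
matrices satisfy the relations of `Ω`. All of them follow from the relations in `Ω` except
`z ^ p = 0` and `∂ ^ p = 0`: the corner entry of `!![z, dz; 0, z] ^ p` is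
`(1 + q⁻² + ⋯ + q⁻²⁽ᵖ⁻¹⁾) z ^ (p - 1) dz`, and this `q`-integer vanishes because `q²` is a
primitive `p`-th root of unity (likewise for `∂`).

A twisted derivation is determined by its values on generators. Applied to `d ∘ par + par ∘ d`
this gives `d ∘ par = -par ∘ d`, after which the cross terms in `d (d (a * b))` cancel, so
`d ∘ d` is again a twisted derivation, zero on the generators, hence zero.
-/

section TwistedDerivation

variable {R A : Type*} [CommRing R] [Ring A] [Algebra R A]

def IsTwistedDerivation (σ τ : A →ₐ[R] A) (D : A →ₗ[R] A) : Prop :=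
  ∀ a b, D (a * b) = D a * τ b + σ a * D b

namespace IsTwistedDerivation

variable {σ τ : A →ₐ[R] A} {D D' : A →ₗ[R] A}

theorem map_one (hD : IsTwistedDerivation σ τ D) : D 1 = 0 := by
  simpa using hD 1 1

theorem map_algebraMap (hD : IsTwistedDerivation σ τ D) (r : R) : D (algebraMap R A r) = 0 := by
  rw [Algebra.algebraMap_eq_smul_one, map_smul, hD.map_one, smul_zero]

theorem add (hD : IsTwistedDerivation σ τ D) (hD' : IsTwistedDerivation σ τ D') :
    IsTwistedDerivation σ τ (D + D') := fun a b => by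
  simp only [LinearMap.add_apply, hD a b, hD' a b]
  noncomm_ring

theorem comp_algHom (hD : IsTwistedDerivation σ τ D) (ρ : A →ₐ[R] A) :
    IsTwistedDerivation (σ.comp ρ) (τ.comp ρ) (D ∘ₗ ρ.toLinearMap) := fun a b => by
  simp [hD (ρ a) (ρ b)]

theorem algHom_comp (hD : IsTwistedDerivation σ τ D) (ρ : A →ₐ[R] A) :
    IsTwistedDerivation (ρ.comp σ) (ρ.comp τ) (ρ.toLinearMap ∘ₗ D) := fun a b => by
  simp [hD a b]

theorem eq_zero_of_adjoin_eq_top (hD : IsTwistedDerivation σ τ D) {s : Set A}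
    (hs : Algebra.adjoin R s = ⊤) (h : ∀ x ∈ s, D x = 0) : D = 0 := by
  ext x
  induction (hs ▸ Algebra.mem_top : x ∈ Algebra.adjoin R s) using Algebra.adjoin_induction with
  | mem x hx => exact h x hx
  | algebraMap r => exact hD.map_algebraMap r
  | add x y _ _ hx hy => simp [hx, hy]
  | mul x y _ _ hx hy => simp [hD x y, hx, hy]

theorem comp_self (hD : IsTwistedDerivation σ (AlgHom.id R A) D)
    (hσ : ∀ x, D (σ x) = -σ (D x)) :
    IsTwistedDerivation (σ.comp σ) (AlgHom.id R A) (D ∘ₗ D) := fun a b => by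
  have hD' : ∀ a b, D (a * b) = D a * b + σ a * D b := hD
  simp only [LinearMap.comp_apply, AlgHom.comp_apply, AlgHom.id_apply, hD', map_add, hσ]
  noncomm_ring

end IsTwistedDerivation

theorem AlgHom.apply_eq_fin_two_upper_of_adjoin_eq_top {σ : A →ₐ[R] A}
    (Φ : A →ₐ[R] Matrix (Fin 2) (Fin 2) A) {s : Set A} (hs : Algebra.adjoin R s = ⊤)
    (h : ∀ x ∈ s, Φ x 0 0 = σ x ∧ Φ x 1 0 = 0 ∧ Φ x 1 1 = x) (x : A) :
    Φ x = !![σ x, Φ x 0 1; 0, x] := by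
  induction (hs ▸ Algebra.mem_top : x ∈ Algebra.adjoin R s) using Algebra.adjoin_induction with
  | mem x hx =>
    obtain ⟨h00, h10, h11⟩ := h x hx
    ext i j; fin_cases i <;> fin_cases j <;> simp [h00, h10, h11]
  | algebraMap r =>
    ext i j; fin_cases i <;> fin_cases j <;> simp [Matrix.algebraMap_matrix_apply]
  | add x y _ _ hx hy =>
    rw [map_add, hx, hy]
    ext i j; fin_cases i <;> fin_cases j <;> simp
  | mul x y _ _ hx hy =>
    rw [map_mul, hx, hy]
    ext i j; fin_cases i <;> fin_cases j <;> simp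

theorem isTwistedDerivation_entry_of_fin_two_upper {σ : A →ₐ[R] A}
    (Φ : A →ₐ[R] Matrix (Fin 2) (Fin 2) A) (hΦ : ∀ x, Φ x = !![σ x, Φ x 0 1; 0, x]) :
    IsTwistedDerivation σ (AlgHom.id R A) (Matrix.entryLinearMap R A 0 1 ∘ₗ Φ.toLinearMap) :=
  fun a b => by
  simp only [LinearMap.comp_apply, AlgHom.toLinearMap_apply, Matrix.entryLinearMap_apply,
    map_mul, AlgHom.id_apply]
  rw [hΦ a, hΦ b]
  simp [add_comm]

end TwistedDerivation

theorem Matrix.fin_two_upper_pow_succ {R A : Type*} [CommSemiring R] [Semiring A] [Algebra R A]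
    {z w : A} {r : R} (h : w * z = r • (z * w)) (n : ℕ) :
    !![z, w; 0, z] ^ (n + 1) =
      !![z ^ (n + 1), (∑ i ∈ Finset.range (n + 1), r ^ i) • (z ^ n * w); 0, z ^ (n + 1)] := by
  induction n with
  | zero => simp
  | succ n ih =>
    have hcomm : z ^ n * w * z = r • (z ^ (n + 1) * w) := by
      rw [mul_assoc, h, mul_smul_comm, ← mul_assoc, ← pow_succ]
    rw [pow_succ, ih, Matrix.mul_fin_two]
    simp only [mul_zero, zero_mul, add_zero, zero_add, ← pow_succ, smul_mul_assoc, hcomm,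
      smul_smul]
    rw [geom_sum_succ (n := n + 1), mul_comm r, add_smul, one_smul, add_comm (z ^ (n + 1) * w)]

-- `δ` stands for `∂`.
structure OmegaRelations (p : ℕ) (q : ℂ) {B : Type*} [Ring B] [Algebra ℂ B] (z δ dz dδ : B) :
    Prop where
  z_pow : z ^ p = 0
  δ_pow : δ ^ p = 0
  δ_mul_z : δ * z = (q - q⁻¹) • (1 : B) + (q ^ 2)⁻¹ • (z * δ)
  dz_mul_dz : dz * dz = 0
  dδ_mul_dδ : dδ * dδ = 0
  dδ_mul_dz : dδ * dz = (-(q ^ 2)⁻¹) • (dz * dδ)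
  dz_mul_z : dz * z = (q ^ 2)⁻¹ • (z * dz)
  dδ_mul_δ : dδ * δ = q ^ 2 • (δ * dδ)
  dz_mul_δ : dz * δ = q ^ 2 • (δ * dz)
  dδ_mul_z : dδ * z = (q ^ 2)⁻¹ • (z * dδ)

namespace OmegaRelations

variable {p : ℕ} {q : ℂ} {B : Type*} [Ring B] [Algebra ℂ B] {z δ dz dδ : B}

theorem lift_compat (h : OmegaRelations p q z δ dz dδ) ⦃x y : FreeAlgebra ℂ (Fin 4)⦄
    (hxy : oRel p q x y) :
    FreeAlgebra.lift ℂ ![z, δ, dz, dδ] x = FreeAlgebra.lift ℂ ![z, δ, dz, dδ] y := by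
  cases hxy <;> simp [h.z_pow, h.δ_pow, h.δ_mul_z, sq, h.dz_mul_dz, h.dδ_mul_dδ, h.dδ_mul_dz,
    h.dz_mul_z, h.dδ_mul_δ, h.dz_mul_δ, h.dδ_mul_z]

theorem neg_forms (h : OmegaRelations p q z δ dz dδ) : OmegaRelations p q z δ (-dz) (-dδ) where
  z_pow := h.z_pow
  δ_pow := h.δ_pow
  δ_mul_z := h.δ_mul_z
  dz_mul_dz := by simp [h.dz_mul_dz]
  dδ_mul_dδ := by simp [h.dδ_mul_dδ]
  dδ_mul_dz := by simp [h.dδ_mul_dz]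
  dz_mul_z := by simp [h.dz_mul_z]
  dδ_mul_δ := by simp [h.dδ_mul_δ]
  dz_mul_δ := by simp [h.dz_mul_δ]
  dδ_mul_z := by simp [h.dδ_mul_z]

theorem fin_two_thickening (hq : IsPrimitiveRoot (q ^ 2) p) (hp : 1 < p)
    (h : OmegaRelations p q z δ dz dδ) :
    OmegaRelations p q !![z, dz; 0, z] !![δ, dδ; 0, δ] !![-dz, 0; 0, dz] !![-dδ, 0; 0, dδ] := by
  obtain ⟨k, rfl⟩ : ∃ k, p = k + 1 := ⟨p - 1, by omega⟩
  have hq2 : q ^ 2 ≠ 0 := hq.ne_zero (by omega)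
  have δ_mul_dz : δ * dz = (q ^ 2)⁻¹ • (dz * δ) := by
    rw [h.dz_mul_δ, smul_smul, inv_mul_cancel₀ hq2, one_smul]
  have dz_mul_dδ : dz * dδ = -(q ^ 2) • (dδ * dz) := by
    rw [h.dδ_mul_dz, smul_smul, neg_mul_neg, mul_inv_cancel₀ hq2, one_smul]
  refine ⟨?_, ?_, ?_, ?_, ?_, ?_, ?_, ?_, ?_, ?_⟩
  · rw [Matrix.fin_two_upper_pow_succ h.dz_mul_z, hq.inv.geom_sum_eq_zero hp, h.z_pow]
    simpa using (Matrix.eta_fin_two (0 : Matrix (Fin 2) (Fin 2) B)).symm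
  · rw [Matrix.fin_two_upper_pow_succ h.dδ_mul_δ, hq.geom_sum_eq_zero hp, h.δ_pow]
    simpa using (Matrix.eta_fin_two (0 : Matrix (Fin 2) (Fin 2) B)).symm
  · ext i j; fin_cases i <;> fin_cases j <;>
      simp [h.δ_mul_z, δ_mul_dz, h.dδ_mul_z, smul_add, add_comm]
  · ext i j; fin_cases i <;> fin_cases j <;> simp [h.dz_mul_dz]
  · ext i j; fin_cases i <;> fin_cases j <;> simp [h.dδ_mul_dδ]
  · ext i j; fin_cases i <;> fin_cases j <;> simp [h.dδ_mul_dz]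
  · ext i j; fin_cases i <;> fin_cases j <;> simp [h.dz_mul_z, h.dz_mul_dz]
  · ext i j; fin_cases i <;> fin_cases j <;> simp [h.dδ_mul_δ, h.dδ_mul_dδ]
  · ext i j; fin_cases i <;> fin_cases j <;> simp [h.dz_mul_δ, dz_mul_dδ]
  · ext i j; fin_cases i <;> fin_cases j <;> simp [h.dδ_mul_z, h.dδ_mul_dz]

end OmegaRelations

namespace OmegaCq

variable {p : ℕ} {q : ℂ} {B : Type*} [Ring B] [Algebra ℂ B] {z δ dz dδ : B}

def mk : FreeAlgebra ℂ (Fin 4) →ₐ[ℂ] OmegaCq p q := RingQuot.mkAlgHom ℂ (oRel p q)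

theorem mk_eq_of_rel {x y : FreeAlgebra ℂ (Fin 4)} (h : oRel p q x y) :
    (mk x : OmegaCq p q) = mk y :=
  RingQuot.mkAlgHom_rel ℂ h

@[simp] theorem mk_ι_zero : (mk (FreeAlgebra.ι ℂ 0) : OmegaCq p q) = Zo p q := rfl
@[simp] theorem mk_ι_one : (mk (FreeAlgebra.ι ℂ 1) : OmegaCq p q) = Do p q := rfl
@[simp] theorem mk_ι_two : (mk (FreeAlgebra.ι ℂ 2) : OmegaCq p q) = DZo p q := rfl
@[simp] theorem mk_ι_three : (mk (FreeAlgebra.ι ℂ 3) : OmegaCq p q) = DDo p q := rfl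

theorem omegaRelations : OmegaRelations p q (Zo p q) (Do p q) (DZo p q) (DDo p q) where
  z_pow := by simpa using mk_eq_of_rel (oRel.znil (p := p) (q := q))
  δ_pow := by simpa using mk_eq_of_rel (oRel.dnil (p := p) (q := q))
  δ_mul_z := by simpa using mk_eq_of_rel (oRel.dz (p := p) (q := q))
  dz_mul_dz := by simpa [sq] using mk_eq_of_rel (oRel.dzdz (p := p) (q := q))
  dδ_mul_dδ := by simpa [sq] using mk_eq_of_rel (oRel.dddd (p := p) (q := q))
  dδ_mul_dz := by simpa using mk_eq_of_rel (oRel.dddz (p := p) (q := q))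
  dz_mul_z := by simpa using mk_eq_of_rel (oRel.dz_z (p := p) (q := q))
  dδ_mul_δ := by simpa using mk_eq_of_rel (oRel.dd_d (p := p) (q := q))
  dz_mul_δ := by simpa using mk_eq_of_rel (oRel.dz_d (p := p) (q := q))
  dδ_mul_z := by simpa using mk_eq_of_rel (oRel.dd_z (p := p) (q := q))

def lift (h : OmegaRelations p q z δ dz dδ) : OmegaCq p q →ₐ[ℂ] B :=
  RingQuot.liftAlgHom ℂ ⟨FreeAlgebra.lift ℂ ![z, δ, dz, dδ], h.lift_compat⟩

theorem lift_mk_ι (h : OmegaRelations p q z δ dz dδ) (i : Fin 4) :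
    lift h (mk (FreeAlgebra.ι ℂ i)) = ![z, δ, dz, dδ] i :=
  (RingQuot.liftAlgHom_mkAlgHom_apply ℂ _ h.lift_compat _).trans (FreeAlgebra.lift_ι_apply _ _)

@[simp] theorem lift_Zo (h : OmegaRelations p q z δ dz dδ) : lift h (Zo p q) = z :=
  lift_mk_ι h 0
@[simp] theorem lift_Do (h : OmegaRelations p q z δ dz dδ) : lift h (Do p q) = δ :=
  lift_mk_ι h 1
@[simp] theorem lift_DZo (h : OmegaRelations p q z δ dz dδ) : lift h (DZo p q) = dz :=
  lift_mk_ι h 2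
@[simp] theorem lift_DDo (h : OmegaRelations p q z δ dz dδ) : lift h (DDo p q) = dδ :=
  lift_mk_ι h 3

theorem adjoin_generators :
    Algebra.adjoin ℂ {Zo p q, Do p q, DZo p q, DDo p q} = ⊤ := by
  have himage : mk '' Set.range (FreeAlgebra.ι ℂ) = {Zo p q, Do p q, DZo p q, DDo p q} := by
    ext x; simp [Fin.exists_fin_succ, eq_comm]
  rw [← himage, Algebra.adjoin_image, FreeAlgebra.adjoin_range_ι, Algebra.map_top,
    AlgHom.range_eq_top]
  exact RingQuot.mkAlgHom_surjective ℂ _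

def parity : OmegaCq p q →ₐ[ℂ] OmegaCq p q := lift omegaRelations.neg_forms

@[simp] theorem parity_Zo : parity (Zo p q) = Zo p q := lift_Zo _
@[simp] theorem parity_Do : parity (Do p q) = Do p q := lift_Do _
@[simp] theorem parity_DZo : parity (DZo p q) = -DZo p q := lift_DZo _
@[simp] theorem parity_DDo : parity (DDo p q) = -DDo p q := lift_DDo _

section Differential

variable (hq : IsPrimitiveRoot (q ^ 2) p) (hp : 1 < p)

def differential : OmegaCq p q →ₗ[ℂ] OmegaCq p q :=
  Matrix.entryLinearMap ℂ (OmegaCq p q) 0 1 ∘ₗ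
    (lift (omegaRelations.fin_two_thickening hq hp)).toLinearMap

@[simp] theorem differential_Zo : differential hq hp (Zo p q) = DZo p q := by
  simp [differential]
@[simp] theorem differential_Do : differential hq hp (Do p q) = DDo p q := by
  simp [differential]
@[simp] theorem differential_DZo : differential hq hp (DZo p q) = 0 := by
  simp [differential]
@[simp] theorem differential_DDo : differential hq hp (DDo p q) = 0 := by
  simp [differential]

theorem isTwistedDerivation_differential :
    IsTwistedDerivation parity (AlgHom.id ℂ (OmegaCq p q)) (differential hq hp) :=
  isTwistedDerivation_entry_of_fin_two_upper _ <|
    AlgHom.apply_eq_fin_two_upper_of_adjoin_eq_top _ adjoin_generators <| by simp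

theorem differential_parity (x : OmegaCq p q) :
    differential hq hp (parity x) = -parity (differential hq hp x) := by
  have hD := isTwistedDerivation_differential hq hp
  have h₁ := hD.comp_algHom parity
  have h₂ := hD.algHom_comp parity
  rw [AlgHom.id_comp] at h₁
  rw [AlgHom.comp_id] at h₂
  have h := (h₁.add h₂).eq_zero_of_adjoin_eq_top adjoin_generators (by simp)
  exact eq_neg_of_add_eq_zero_left (LinearMap.congr_fun h x)

theorem differential_differential (x : OmegaCq p q) :
    differential hq hp (differential hq hp x) = 0 :=
  LinearMap.congr_fun (((isTwistedDerivation_differential hq hp).comp_self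
    (differential_parity hq hp)).eq_zero_of_adjoin_eq_top adjoin_generators (by simp)) x

end Differential

end OmegaCq

theorem quantum_de_rham_differential
    (p : ℕ) (hp : 2 ≤ p)
    (q : ℂ) (hq : q = Complex.exp (Real.pi * Complex.I / p)) :
    ∃ (par : OmegaCq p q →ₐ[ℂ] OmegaCq p q) (d : OmegaCq p q →ₗ[ℂ] OmegaCq p q),
      -- the parity (grading) automorphism
      par (Zo p q) = Zo p q ∧ par (Do p q) = Do p q ∧
      par (DZo p q) = -DZo p q ∧ par (DDo p q) = -DDo p q ∧
      -- values of the differential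
      d (Zo p q) = DZo p q ∧ d (Do p q) = DDo p q ∧
      d (DZo p q) = 0 ∧ d (DDo p q) = 0 ∧ d (1 : OmegaCq p q) = 0 ∧
      -- graded Leibniz rule
      (∀ a b : OmegaCq p q, d (a * b) = d a * b + par a * d b) ∧
      -- `d² = 0`
      (∀ x : OmegaCq p q, d (d x) = 0) := by
  have hq2 : IsPrimitiveRoot (q ^ 2) p := by
    convert Complex.isPrimitiveRoot_exp p (by omega) using 1
    rw [hq, ← Complex.exp_nat_mul]
    push_cast
    congr 1
    ring
  have hD := OmegaCq.isTwistedDerivation_differential hq2 (by omega)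
  exact ⟨OmegaCq.parity, OmegaCq.differential hq2 (by omega), by simp, by simp, by simp, by simp,
    by simp, by simp, by simp, by simp, hD.map_one, hD, OmegaCq.differential_differential hq2 _⟩
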